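/- arXiv:2412.20095 — 2 statements merged into one kernel-verified Lean document; each statement's English description precedes it below -/
import Mathlib

section
/- There is no finite simple nonabelian group G whose same-size conjugacy class set is {1, r², 4r², 16r} for some prime r. -/
open scoped MatrixGroups

/-- The size of the conjugacy class of `x`. -/
noncomputable def classSize {G : Type*} [Group G] (x : G) : ℕ :=
  Nat.card {y : G // IsConj x y}

/-- `u_G(n)`: the number of elements of `G` whose conjugacy class has size `n`. -/
noncomputable def sameSizeCount (G : Type*) [Group G] (n : ℕ) : ℕ :=
  Nat.card {x : G // classSize x = n}

/-- `U(G)`: the same-size conjugacy class set of `G`. -/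
def sameSizeSet (G : Type*) [Group G] : Set ℕ :=
  {m | ∃ x : G, m = sameSizeCount G (classSize x)}

section Aux

set_option linter.unusedSectionVars false

variable {G : Type*} [Group G] [Finite G]

lemma classSize_eq_of_isConj {x y : G} (h : IsConj x y) : classSize x = classSize y :=
  Nat.card_congr (Equiv.subtypeEquivRight fun _ =>
    ⟨fun hx => h.symm.trans hx, fun hy => h.trans hy⟩)

lemma classSize_eq_card_orbit (x : G) :
    classSize x = Nat.card (MulAction.orbit (ConjAct G) x) := by
  refine Nat.card_congr (Equiv.subtypeEquivRight fun y => ?_)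
  rw [ConjAct.mem_orbit_conjAct, isConj_comm]

lemma classSize_dvd_card (x : G) : classSize x ∣ Nat.card G := by
  classical
  have : Fintype G := Fintype.ofFinite G
  rw [classSize_eq_card_orbit, Nat.card_eq_fintype_card, Nat.card_eq_fintype_card]
  have h := MulAction.card_orbit_mul_card_stabilizer_eq_card_group (ConjAct G) x
  have he : Fintype.card (ConjAct G) = Fintype.card G := rfl
  exact ⟨_, (he ▸ h).symm⟩

lemma classSize_eq_one_iff (hZ : Subgroup.center G = ⊥) {x : G} :
    classSize x = 1 ↔ x = 1 := by
  constructor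
  · intro h
    obtain ⟨hs, -⟩ := Nat.card_eq_one_iff_unique.mp h
    have hx : x ∈ Subgroup.center G := by
      rw [Subgroup.mem_center_iff]
      intro g
      have h1 : (⟨g * x * g⁻¹, isConj_iff.mpr ⟨g, rfl⟩⟩ : {y : G // IsConj x y}) =
          ⟨x, IsConj.refl x⟩ := Subsingleton.elim _ _
      have h2 : g * x * g⁻¹ = x := Subtype.ext_iff.mp h1
      calc g * x = g * x * g⁻¹ * g := by group
        _ = x * g := by rw [h2]
    rw [hZ, Subgroup.mem_bot] at hx
    exact hx
  · rintro rfl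
    rw [classSize]
    refine Nat.card_eq_one_iff_unique.mpr ⟨⟨fun a b => ?_⟩, ⟨1, IsConj.refl 1⟩⟩
    obtain ⟨a, ha⟩ := a
    obtain ⟨b, hb⟩ := b
    obtain ⟨c, hc⟩ := isConj_iff.mp ha
    obtain ⟨d, hd⟩ := isConj_iff.mp hb
    simp only [mul_one] at hc hd
    ext
    simp [← hc, ← hd, mul_inv_cancel]

lemma sameSizeCount_eq_filter_card [Fintype G] [DecidableEq G] (n : ℕ) :
    sameSizeCount G n = (Finset.univ.filter fun z : G => classSize z = n).card := by
  classical
  rw [sameSizeCount, Nat.card_eq_fintype_card, Fintype.card_subtype]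

lemma card_fiber_mk [Fintype G] [DecidableEq (ConjClasses G)] (z : G) :
    (Finset.univ.filter fun w : G => ConjClasses.mk w = ConjClasses.mk z).card =
      classSize z := by
  classical
  rw [← Fintype.card_subtype]
  rw [← Nat.card_eq_fintype_card, classSize]
  refine Nat.card_congr (Equiv.subtypeEquivRight fun w => ?_)
  rw [ConjClasses.mk_eq_mk_iff_isConj, isConj_comm]

lemma classSize_dvd_sameSizeCount (x : G) :
    classSize x ∣ sameSizeCount G (classSize x) := by
  classical
  have : Fintype G := Fintype.ofFinite G
  set n := classSize x with hn
  rw [sameSizeCount_eq_filter_card,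
    Finset.card_eq_sum_card_image (fun z : G => ConjClasses.mk z)]
  refine Finset.dvd_sum fun c hc => ?_
  obtain ⟨z, hz, hzc⟩ := Finset.mem_image.mp hc
  have hzn : classSize z = n := (Finset.mem_filter.mp hz).2
  have hfe : (Finset.univ.filter fun w : G => classSize w = n).filter
      (fun w => ConjClasses.mk w = c)
      = Finset.univ.filter fun w : G => ConjClasses.mk w = ConjClasses.mk z := by
    subst hzc
    ext w
    simp only [Finset.mem_filter, Finset.mem_univ, true_and]
    refine ⟨fun h => h.2, fun h => ⟨?_, h⟩⟩
    exact (classSize_eq_of_isConj (ConjClasses.mk_eq_mk_iff_isConj.mp h)).trans hzn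
  rw [hfe, card_fiber_mk, hzn]

end Aux

theorem stmt_4 (r : ℕ) (hr : r.Prime) (G : Type*) [Group G] [Finite G]
    [IsSimpleGroup G] (hna : ¬ ∀ a b : G, a * b = b * a) :
    sameSizeSet G ≠ {1, r ^ 2, 4 * r ^ 2, 16 * r} := by
  intro hU
  classical
  have : Fintype G := Fintype.ofFinite G
  have hr2 : 2 ≤ r := hr.two_le
  -- the center is trivial
  have hZ : Subgroup.center G = ⊥ := by
    rcases Subgroup.Normal.eq_bot_or_eq_top
        (inferInstance : (Subgroup.center G).Normal) with h | h
    · exact h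
    · exact absurd (fun a b => (Subgroup.mem_center_iff.mp (h ▸ Subgroup.mem_top a) b).symm) hna
  -- the fiber over class size 1 is {1}
  have hfilter1 : (Finset.univ.filter fun z : G => classSize z = 1) = {1} := by
    ext w
    simp [classSize_eq_one_iff hZ]
  have hssc1 : sameSizeCount G 1 = 1 := by
    rw [sameSizeCount_eq_filter_card, hfilter1, Finset.card_singleton]
  -- every value of sameSizeCount lies in the given set
  have hmem : ∀ x : G, sameSizeCount G (classSize x) ∈
      ({1, r ^ 2, 4 * r ^ 2, 16 * r} : Set ℕ) := fun x => hU ▸ ⟨x, rfl⟩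
  -- |G| ≡ 1 mod r
  have hcard1 : ∃ k, Fintype.card G = 1 + r * k := by
    have hcardG : Fintype.card G = ∑ n ∈ Finset.univ.image (classSize (G := G)),
        (Finset.univ.filter fun z : G => classSize z = n).card :=
      Finset.card_eq_sum_card_image _ _
    have h1Im : 1 ∈ Finset.univ.image (classSize (G := G)) :=
      Finset.mem_image.mpr ⟨1, Finset.mem_univ _, (classSize_eq_one_iff hZ).mpr rfl⟩
    rw [← Finset.add_sum_erase _ _ h1Im, hfilter1, Finset.card_singleton] at hcardG
    have hdvd : r ∣ ∑ n ∈ (Finset.univ.image (classSize (G := G))).erase 1,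
        (Finset.univ.filter fun z : G => classSize z = n).card := by
      refine Finset.dvd_sum fun n hn => ?_
      obtain ⟨hn1, hnIm⟩ := Finset.mem_erase.mp hn
      obtain ⟨x, -, hx⟩ := Finset.mem_image.mp hnIm
      rw [← sameSizeCount_eq_filter_card]
      have hmx := hmem x
      rw [hx] at hmx
      have hdn : n ∣ sameSizeCount G n := hx ▸ classSize_dvd_sameSizeCount x
      rcases hmx with h | h | h | h
      · exact absurd (Nat.eq_one_of_dvd_one (h ▸ hdn)) hn1
      · rw [h]; exact dvd_pow_self r two_ne_zero
      · rw [h]; exact Dvd.dvd.mul_left (dvd_pow_self r two_ne_zero) 4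
      · rw [h]; exact Dvd.dvd.mul_left dvd_rfl 16
    obtain ⟨k, hk⟩ := hdvd
    exact ⟨k, by rw [hcardG, hk]⟩
  -- some class size n divides r², n ≠ 1, so r ∣ |G|
  have hr2mem : (r ^ 2 : ℕ) ∈ sameSizeSet G := by
    rw [hU]; exact Or.inr (Or.inl rfl)
  obtain ⟨x, hx⟩ := hr2mem
  have hdvd : classSize x ∣ r ^ 2 := hx ▸ classSize_dvd_sameSizeCount x
  have hne1 : classSize x ≠ 1 := by
    intro h1
    rw [h1, hssc1] at hx
    have := hr.one_lt
    nlinarith [sq_nonneg r]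
  have hrn : r ∣ classSize x := by
    by_contra hnd
    have hc : Nat.Coprime (classSize x) r :=
      Nat.coprime_comm.mp ((hr.coprime_iff_not_dvd).mpr hnd)
    exact hne1 (Nat.Coprime.eq_one_of_dvd (hc.pow_right 2) hdvd)
  have hrG : r ∣ Fintype.card G := by
    have := classSize_dvd_card x
    rw [Nat.card_eq_fintype_card] at this
    exact hrn.trans this
  obtain ⟨k, hk⟩ := hcard1
  have h1 : r ∣ 1 := by
    have : r ∣ Fintype.card G - r * k := Nat.dvd_sub hrG (Dvd.intro _ rfl)
    rwa [hk, Nat.add_sub_cancel] at this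
  exact absurd (Nat.le_of_dvd one_pos h1) (by omega)
end

section
/- There is no finite simple nonabelian group G whose same-size conjugacy class set is {1, 2p, 8p, 16p} for an odd prime p. -/
open scoped MatrixGroups

section Aux

variable {G : Type*} [Group G] [Finite G]

lemma mem_center_of_classSize_eq_one {x : G} (h : classSize x = 1) :
    x ∈ Subgroup.center G := by
  rw [Subgroup.mem_center_iff]
  intro g
  obtain ⟨hsub, -⟩ := Nat.card_eq_one_iff_unique.mp h
  have h1 : IsConj x (g * x * g⁻¹) := isConj_iff.mpr ⟨g, rfl⟩
  have : (⟨g * x * g⁻¹, h1⟩ : {y : G // IsConj x y}) = ⟨x, IsConj.refl x⟩ :=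
    Subsingleton.elim _ _
  have := congrArg Subtype.val this
  simp only at this
  calc g * x = g * x * g⁻¹ * g := by group
    _ = x * g := by rw [this]

lemma classSize_one_eq_one : classSize (1 : G) = 1 := by
  rw [classSize, Nat.card_eq_one_iff_unique]
  refine ⟨⟨fun a b => ?_⟩, ⟨⟨1, IsConj.refl 1⟩⟩⟩
  have ha := isConj_one_right.mp a.2
  have hb := isConj_one_right.mp b.2
  exact Subtype.ext (ha.trans hb.symm)

end Aux

theorem stmt_6 (p : ℕ) (hp : p.Prime) (hodd : Odd p) (G : Type*) [Group G]
    [Finite G] [IsSimpleGroup G] (hna : ¬ ∀ a b : G, a * b = b * a) :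
    sameSizeSet G ≠ {1, 2 * p, 8 * p, 16 * p} := by
  intro hS
  classical
  have hFG : Fintype G := Fintype.ofFinite G
  have hp2 : 2 ≤ p := hp.two_le
  -- center is trivial
  have hcenter : Subgroup.center G = ⊥ := by
    rcases Subgroup.Normal.eq_bot_or_eq_top (inferInstance : (Subgroup.center G).Normal) with h | h
    · exact h
    · exfalso
      apply hna
      intro a b
      have : a ∈ Subgroup.center G := h ▸ Subgroup.mem_top a
      exact (Subgroup.mem_center_iff.mp this b).symm
  have hcs1 : ∀ x : G, classSize x = 1 → x = 1 := fun x hx => by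
    have := mem_center_of_classSize_eq_one hx
    rwa [hcenter, Subgroup.mem_bot] at this
  -- the count at class size 1 is 1
  have hu1 : sameSizeCount G 1 = 1 := by
    rw [sameSizeCount, Nat.card_eq_one_iff_unique]
    refine ⟨⟨fun a b => Subtype.ext ((hcs1 _ a.2).trans (hcs1 _ b.2).symm)⟩,
      ⟨⟨1, classSize_one_eq_one⟩⟩⟩
  -- each attained count is in the prescribed set
  have hmem : ∀ x : G, sameSizeCount G (classSize x) = 1 ∨
      sameSizeCount G (classSize x) = 2 * p ∨ sameSizeCount G (classSize x) = 8 * p ∨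
      sameSizeCount G (classSize x) = 16 * p := by
    intro x
    have : sameSizeCount G (classSize x) ∈ sameSizeSet G := ⟨x, rfl⟩
    rw [hS] at this
    simpa using this
  -- counts at non-trivial class sizes are even
  have heven : ∀ x : G, classSize x ≠ 1 → 2 ∣ sameSizeCount G (classSize x) := by
    intro x hx
    rcases hmem x with h | h | h | h
    · exact absurd (Nat.eq_one_of_dvd_one (h ▸ classSize_dvd_sameSizeCount x)) hx
    · exact h ▸ ⟨p, rfl⟩
    · exact h ▸ ⟨4 * p, by ring⟩
    · exact h ▸ ⟨8 * p, by ring⟩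
  -- |G| is odd
  have hGodd : Odd (Nat.card G) := by
    have hcard : Fintype.card G = ∑ n ∈ Finset.univ.image (classSize (G := G)),
        (Finset.univ.filter fun x : G => classSize x = n).card :=
      Finset.card_eq_sum_card_fiberwise fun x _ => Finset.mem_image_of_mem _ (Finset.mem_univ x)
    have hcount : ∀ n : ℕ, (Finset.univ.filter fun x : G => classSize x = n).card
        = sameSizeCount G n := by
      intro n
      rw [sameSizeCount, Nat.card_eq_fintype_card, Fintype.card_subtype]
    have h1mem : (1 : ℕ) ∈ Finset.univ.image (classSize (G := G)) :=
      Finset.mem_image.mpr ⟨1, Finset.mem_univ _, classSize_one_eq_one⟩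
    rw [Nat.card_eq_fintype_card, hcard,
      ← Finset.insert_erase h1mem, Finset.sum_insert (Finset.notMem_erase _ _)]
    have heven' : 2 ∣ ∑ n ∈ (Finset.univ.image (classSize (G := G))).erase 1,
        (Finset.univ.filter fun x : G => classSize x = n).card := by
      apply Finset.dvd_sum
      intro n hn
      obtain ⟨x, -, hx⟩ := Finset.mem_image.mp (Finset.mem_of_mem_erase hn)
      rw [hcount, ← hx]
      exact heven x (hx ▸ Finset.ne_of_mem_erase hn)
    obtain ⟨k, hk⟩ := heven'
    rw [hcount, hu1, hk]
    exact ⟨k, by ring⟩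
  -- a witness whose count is m forces its class size to be p, for m ∈ {2p, 8p}
  have hkey : ∀ m : ℕ, m ∈ sameSizeSet G → m ≠ 1 → m ∣ 8 * p →
      ∃ x : G, classSize x = p ∧ sameSizeCount G p = m := by
    intro m hm hm1 hmd
    obtain ⟨x, hx⟩ := hm
    have hdvd : classSize x ∣ m := hx ▸ classSize_dvd_sameSizeCount x
    have hne1 : classSize x ≠ 1 := by
      intro h
      rw [h, hu1] at hx
      exact hm1 hx
    have hoddn : Odd (classSize x) := hGodd.of_dvd_nat (classSize_dvd_card x)
    have hcop : Nat.Coprime (classSize x) 8 := by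
      have h2 : Nat.Coprime (classSize x) 2 :=
        Nat.coprime_two_right.mpr hoddn
      have : Nat.Coprime (classSize x) (2 ^ 3) := h2.pow_right 3
      simpa using this
    have hdp : classSize x ∣ p := by
      have : classSize x ∣ p * 8 := by
        rw [mul_comm]
        exact hdvd.trans hmd
      exact hcop.dvd_of_dvd_mul_right this
    have hnp : classSize x = p :=
      (hp.eq_one_or_self_of_dvd _ hdp).resolve_left hne1
    exact ⟨x, hnp, by rw [← hnp]; exact hx.symm⟩
  have h2p : (2 * p : ℕ) ∈ sameSizeSet G := by rw [hS]; simp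
  have h8p : (8 * p : ℕ) ∈ sameSizeSet G := by rw [hS]; simp
  obtain ⟨x2, -, hx2⟩ := hkey (2 * p) h2p (by omega) ⟨2 * 2, by ring⟩
  obtain ⟨x8, -, hx8⟩ := hkey (8 * p) h8p (by omega) dvd_rfl
  rw [hx2] at hx8
  omega
end
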